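/- (Theorem 2, maximum invariance, upper-bound direction.) For every Markov policy π, every 0 ≤ k ≤ N and every x ∈ X, the policy safety value satisfies V_k^π(x) ≤ W_k(x), where V_k^π(x) = P_{k,x}^π( x_j ∈ A for all k ≤ j ≤ N ) and W_k are the maximal DP value functions. Consequently sup_{π} V_k^π(x) ≤ W_k(x). -/

import Mathlib

/-
By backward induction on `k`. If the current state is unsafe the trajectory has already left `A`;
otherwise the safety probability from time `k` is the average, over the next state drawn with the
action the policy chooses, of the safety probability from time `k + 1`. By induction this is at most
the average of `W_{k+1}` under that action, hence at most the supremum over all actions, `W_k`.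
-/

open MeasureTheory ProbabilityTheory Set

noncomputable section

namespace StochasticSafety

variable {X U : Type*} [MeasurableSpace X] [MeasurableSpace U]

/-- A Markov policy: a sequence of (Borel-)measurable maps from states to actions. -/
structure Policy (X U : Type*) [MeasurableSpace X] [MeasurableSpace U] where
  act : ℕ → X → U
  measurable_act : ∀ k, Measurable (act k)

/-- The closed-loop kernel `κ_k^π(·|x) = T(·|x, μ_k(x))` of a policy at time `k`. -/
def Policy.kernel (T : Kernel (X × U) X) (π : Policy X U) (k : ℕ) : Kernel X X :=
  T.comap (fun x => (x, π.act k x)) (measurable_id.prodMk (π.measurable_act k))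

/-- One step of the closed-loop trajectory evolution at time `j`: given the trajectory
built so far, sample `y` from `κ` applied at coordinate `j` and record it at
coordinate `j + 1`. -/
def step (κ : Kernel X X) (j : ℕ) : Kernel (ℕ → X) (ℕ → X) :=
  Kernel.map (Kernel.id ×ₖ κ.comap (fun ω => ω j) (measurable_pi_apply j))
    (fun p => Function.update p.1 (j + 1) p.2)

/-- Kernel describing `m` steps of the trajectory evolution, starting at time `k`,
under the time-dependent kernels `κ`. -/
def evolve (κ : ℕ → Kernel X X) : ℕ → ℕ → Kernel (ℕ → X) (ℕ → X)
  | _, 0 => Kernel.id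
  | k, (m + 1) => (evolve κ (k + 1) m) ∘ₖ step (κ k) k

/-- The law `P_{k,x}^π` of the closed-loop trajectory `(x_k, …, x_N)` started at `x`
at time `k` under policy `π` (finite Ionescu–Tulcea composition of the closed-loop
kernels): the states `x_k, …, x_N` are recorded in coordinates `k, …, N` of `ℕ → X`,
all other coordinates carry the irrelevant initial value `x`. -/
def trajLaw (T : Kernel (X × U) X) (π : Policy X U) (N k : ℕ) (x : X) :
    Measure (ℕ → X) :=
  evolve (π.kernel T) k (N - k) (fun _ => x)

/-- The event that the trajectory stays in `A` at all times `j` with `k ≤ j ≤ N`. -/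
def safeEvent (A : Set X) (k N : ℕ) : Set (ℕ → X) :=
  {ω | ∀ j, k ≤ j → j ≤ N → ω j ∈ A}

/-- The event that the trajectory visits `A` at some time `j` with `k ≤ j ≤ N`. -/
def reachEvent (A : Set X) (k N : ℕ) : Set (ℕ → X) :=
  {ω | ∃ j, k ≤ j ∧ j ≤ N ∧ ω j ∈ A}


instance (T : Kernel (X × U) X) [IsMarkovKernel T] (π : Policy X U) (k : ℕ) :
    IsMarkovKernel (π.kernel T k) := by
  unfold Policy.kernel
  infer_instance

lemma Policy.kernel_apply (T : Kernel (X × U) X) (π : Policy X U) (k : ℕ) (x : X) :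
    π.kernel T k x = T (x, π.act k x) :=
  rfl

lemma measurableSet_safeEvent {A : Set X} (hA : MeasurableSet A) (k N : ℕ) :
    MeasurableSet (safeEvent A k N) := by
  simp only [safeEvent, ofPred_forall]
  exact .iInter fun j => .iInter fun _ => .iInter fun _ => measurable_pi_apply j hA

lemma safeEvent_self_eq {α : Type*} (A : Set α) (N : ℕ) :
    safeEvent A N N = (fun ω : ℕ → α => ω N) ⁻¹' A := by
  ext ω
  refine ⟨fun h => h N le_rfl le_rfl, fun h j hNj hjN => ?_⟩
  rwa [le_antisymm hjN hNj]

lemma safeEvent_subset_preimage {α : Type*} {A : Set α} {k N : ℕ} (hkN : k ≤ N) :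
    safeEvent A k N ⊆ (fun ω : ℕ → α => ω k) ⁻¹' A :=
  fun _ h => h k le_rfl hkN

lemma safeEvent_mono_left {α : Type*} (A : Set α) {k k' : ℕ} (hk : k ≤ k') (N : ℕ) :
    safeEvent A k N ⊆ safeEvent A k' N :=
  fun _ h j hj hjN => h j (hk.trans hj) hjN

lemma step_apply (κ : Kernel X X) [IsSFiniteKernel κ] (j : ℕ) (ω : ℕ → X) :
    step κ j ω = (κ (ω j)).map (Function.update ω (j + 1)) := by
  rw [step, Kernel.map_apply _ measurable_update', Kernel.prod_apply, Kernel.id_apply,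
    Kernel.comap_apply, Measure.dirac_prod,
    Measure.map_map measurable_update' measurable_prodMk_left]
  rfl

lemma evolve_succ_apply (κ : ℕ → Kernel X X) [∀ i, IsSFiniteKernel (κ i)] (k m : ℕ)
    (ω : ℕ → X) {s : Set (ℕ → X)} (hs : MeasurableSet s) :
    evolve κ k (m + 1) ω s
      = ∫⁻ y, evolve κ (k + 1) m (Function.update ω (k + 1) y) s ∂(κ k (ω k)) := by
  rw [evolve, Kernel.comp_apply' _ _ _ hs, step_apply,
    lintegral_map (Kernel.measurable_coe _ hs) (measurable_update ω)]

lemma evolve_apply_ne_eq_zero [MeasurableSingletonClass X] (κ : ℕ → Kernel X X)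
    [∀ i, IsSFiniteKernel (κ i)] (m : ℕ) {j k : ℕ} (hjk : j ≤ k) (ω : ℕ → X) :
    evolve κ k m ω {ω' | ω' j ≠ ω j} = 0 := by
  have hs : ∀ x : X, MeasurableSet {ω' : ℕ → X | ω' j ≠ x} := fun x =>
    (measurableSet_singleton x).compl.preimage (measurable_pi_apply j)
  induction m generalizing k ω with
  | zero => simp [evolve, Kernel.id_apply, Measure.dirac_apply' _ (hs _)]
  | succ m ih =>
    rw [evolve_succ_apply _ _ _ _ (hs _)]
    have hzero : ∀ y,
        evolve κ (k + 1) m (Function.update ω (k + 1) y) {ω' | ω' j ≠ ω j} = 0 := by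
      intro y
      have hupdate : Function.update ω (k + 1) y j = ω j := Function.update_of_ne (by omega) _ _
      simpa only [hupdate] using ih (hjk.trans k.le_succ) (Function.update ω (k + 1) y)
    simp [hzero]

lemma evolve_safeEvent_le_of_supersolution [MeasurableSingletonClass X] (κ : ℕ → Kernel X X)
    [∀ i, IsSFiniteKernel (κ i)] {A : Set X} (hA : MeasurableSet A) {N : ℕ}
    (v : ℕ → X → ENNReal) (hvN : ∀ x ∈ A, 1 ≤ v N x)
    (hv : ∀ k < N, ∀ x ∈ A, ∫⁻ y, v (k + 1) y ∂(κ k x) ≤ v k x)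
    (m k : ℕ) (hkm : k + m = N) (ω : ℕ → X) :
    evolve κ k m ω (safeEvent A k N) ≤ v k (ω k) := by
  induction m generalizing k ω with
  | zero =>
    obtain rfl : k = N := by omega
    rw [evolve, Kernel.id_apply, safeEvent_self_eq,
      Measure.dirac_apply' _ (measurable_pi_apply k hA)]
    by_cases hω : ω k ∈ A
    · simpa [hω] using hvN _ hω
    · simp [hω]
  | succ m ih =>
    have hkN : k < N := by omega
    rw [evolve_succ_apply _ _ _ _ (measurableSet_safeEvent hA k N)]
    by_cases hω : ω k ∈ A
    · calc ∫⁻ y, evolve κ (k + 1) m (Function.update ω (k + 1) y) (safeEvent A k N)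
              ∂(κ k (ω k))
          ≤ ∫⁻ y, v (k + 1) y ∂(κ k (ω k)) := lintegral_mono fun y => by
            simpa using (measure_mono (safeEvent_mono_left A k.le_succ N)).trans
              (ih (k + 1) (by omega) (Function.update ω (k + 1) y))
        _ ≤ v k (ω k) := hv k hkN _ hω
    · have hunsafe : ∀ y,
          evolve κ (k + 1) m (Function.update ω (k + 1) y) (safeEvent A k N) = 0 := by
        intro y
        refine measure_mono_null (fun ω' hω' => ?_)
          (evolve_apply_ne_eq_zero κ m k.le_succ (Function.update ω (k + 1) y))
        rw [mem_ofPred_eq, Function.update_of_ne (by omega)]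
        exact fun h => hω (h ▸ safeEvent_subset_preimage hkN.le hω')
      simp [hunsafe]

lemma integral_mem_Icc_zero_one {α : Type*} [MeasurableSpace α] (μ : Measure α)
    [IsProbabilityMeasure μ] {f : α → ℝ} (hf : ∀ y, f y ∈ Icc 0 1) :
    ∫ y, f y ∂μ ∈ Icc 0 1 := by
  refine ⟨integral_nonneg fun y => (hf y).1, ?_⟩
  by_cases hint : Integrable f μ
  · simpa using integral_mono hint (integrable_const 1) fun y => (hf y).2
  · simp [integral_undef hint]

def bellman (T : Kernel (X × U) X) (A : Set X) (V : X → ℝ) (x : X) : ℝ :=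
  ⨆ u : U, A.indicator (fun x' => ∫ y, V y ∂(T (x', u))) x

section Bellman

variable (T : Kernel (X × U) X) [IsMarkovKernel T] (A : Set X) {V : X → ℝ}

lemma indicator_integral_mem_Icc_zero_one (hV : ∀ y, V y ∈ Icc 0 1) (u : U) (x : X) :
    A.indicator (fun x' => ∫ y, V y ∂(T (x', u))) x ∈ Icc 0 1 := by
  by_cases hx : x ∈ A
  · simpa [hx] using integral_mem_Icc_zero_one _ hV
  · simp [hx]

lemma bellman_mem_Icc_zero_one (hV : ∀ y, V y ∈ Icc 0 1) (x : X) :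
    bellman T A V x ∈ Icc 0 1 :=
  ⟨Real.iSup_nonneg fun u => (indicator_integral_mem_Icc_zero_one T A hV u x).1,
    Real.iSup_le (fun u => (indicator_integral_mem_Icc_zero_one T A hV u x).2) zero_le_one⟩

lemma integral_le_bellman (hV : ∀ y, V y ∈ Icc 0 1) {x : X} (hx : x ∈ A) (u : U) :
    ∫ y, V y ∂(T (x, u)) ≤ bellman T A V x := by
  have hbdd : BddAbove (range fun u => A.indicator (fun x' => ∫ y, V y ∂(T (x', u))) x) :=
    ⟨1, forall_mem_range.2 fun u => (indicator_integral_mem_Icc_zero_one T A hV u x).2⟩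
  have hle := le_ciSup hbdd u
  rwa [indicator_of_mem hx] at hle

lemma lintegral_ofReal_le_bellman (hVmeas : Measurable V) (hV : ∀ y, V y ∈ Icc 0 1) {x : X}
    (hx : x ∈ A) (u : U) :
    ∫⁻ y, ENNReal.ofReal (V y) ∂(T (x, u)) ≤ ENNReal.ofReal (bellman T A V x) := by
  have hint : Integrable V (T (x, u)) :=
    .of_bound hVmeas.aestronglyMeasurable 1 (ae_of_all _ fun y => by
      simpa [abs_le] using ⟨(hV y).1.trans' (by norm_num), (hV y).2⟩)
  rw [← ofReal_integral_eq_lintegral_ofReal hint (ae_of_all _ fun y => (hV y).1)]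
  exact ENNReal.ofReal_le_ofReal (integral_le_bellman T A hV hx u)

end Bellman

lemma dp_value_mem_Icc_zero_one (T : Kernel (X × U) X) [IsMarkovKernel T] {N : ℕ} {A : Set X}
    {W : ℕ → X → ℝ} (hWN : ∀ x, W N x = A.indicator 1 x)
    (hW : ∀ k < N, ∀ x, W k x = bellman T A (W (k + 1)) x) {k : ℕ} (hk : k ≤ N) (x : X) :
    W k x ∈ Icc 0 1 := by
  induction hk using Nat.decreasingInduction generalizing x with
  | self => by_cases hx : x ∈ A <;> simp [hWN, hx]
  | of_succ k hkN ih => exact hW k hkN x ▸ bellman_mem_Icc_zero_one T A ih x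

variable [StandardBorelSpace X] [TopologicalSpace U]
  [TopologicalSpace.MetrizableSpace U] [CompactSpace U] [Nonempty U] [BorelSpace U]

/-- Theorem 2, maximum invariance, upper bound: for every Markov policy
`π`, every `0 ≤ k ≤ N` and every `x`, the policy safety value
`V_k^π(x) = P_{k,x}^π(x_j ∈ A for all k ≤ j ≤ N)` is at most the maximal DP value
`W_k(x)`; consequently `sup_π V_k^π(x) ≤ W_k(x)`. -/
theorem policy_value_le_max_dp_value
    (T : Kernel (X × U) X) [IsMarkovKernel T]
    (N : ℕ) (A : Set X) (hA : MeasurableSet A)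
    (W : ℕ → X → ℝ) (hWmeas : ∀ k, Measurable (W k))
    (hWN : ∀ x, W N x = A.indicator 1 x)
    (hW : ∀ k < N, ∀ x,
      W k x = ⨆ u : U, A.indicator (fun x' => ∫ y, W (k + 1) y ∂(T (x', u))) x) :
    (∀ π : Policy X U, ∀ k ≤ N, ∀ x,
        (trajLaw T π N k x (safeEvent A k N)).toReal ≤ W k x) ∧
    (∀ k ≤ N, ∀ x,
        (⨆ π : Policy X U, (trajLaw T π N k x (safeEvent A k N)).toReal) ≤ W k x) := by
  have hW01 : ∀ k ≤ N, ∀ x, W k x ∈ Icc 0 1 := fun k hk =>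
    dp_value_mem_Icc_zero_one T hWN hW hk
  have hvalue : ∀ π : Policy X U, ∀ k ≤ N, ∀ x,
      (trajLaw T π N k x (safeEvent A k N)).toReal ≤ W k x := by
    intro π k hk x
    refine ENNReal.toReal_le_of_le_ofReal (hW01 k hk x).1 ?_
    refine evolve_safeEvent_le_of_supersolution (π.kernel T) hA
      (fun k x => ENNReal.ofReal (W k x)) ?_ ?_ (N - k) k (by omega) (fun _ => x)
    · intro x hx
      simp [hWN, hx]
    · intro k hkN x hx
      rw [Policy.kernel_apply, hW k hkN x]
      exact lintegral_ofReal_le_bellman T A (hWmeas _) (hW01 (k + 1) hkN) hx _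
  exact ⟨hvalue, fun k hk x => Real.iSup_le (fun π => hvalue π k hk x) (hW01 k hk x).1⟩

end StochasticSafety
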